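/- arXiv:2411.06114 — 9 statements merged into one kernel-verified Lean document; each statement's English description precedes it below -/
import Mathlib

section
/- Let a₀, a₁, …, a_d be d+1 affinely independent points in ℝ^d. Then the function F(q) = ∑_{i=0}^{d} dist(q, affineSpan {a_j : j ≠ i}), the sum of the distances from q to the d facet hyperplanes of the simplex with vertices a₀, …, a_d, tends to infinity as ‖q‖ → ∞; that is, F tends to atTop along the cocompact filter on ℝ^d. -/
open Filter Metric Set Module RealInnerProductSpace

private lemma my_le_infDist {α : Type*} [MetricSpace α] {s : Set α} {x : α} {r : ℝ}
    (hs : s.Nonempty) (h : ∀ y ∈ s, r ≤ dist x y) : r ≤ Metric.infDist x s := by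
  by_contra hlt
  obtain ⟨y, hy, hdy⟩ := (Metric.infDist_lt_iff hs).mp (not_le.mp hlt)
  exact absurd (h y hy) (not_le.mpr hdy)

/-- For `d+1` affinely independent points `a₀, …, a_d` in `ℝ^d`, the sum of the distances
from `q` to the `d+1` facet hyperplanes of the simplex they span tends to infinity
as `‖q‖ → ∞` (i.e., along the cocompact filter). -/
theorem sum_dist_facet_hyperplanes_tendsto_atTop_cocompact (d : ℕ) (hd : 1 ≤ d)
    (a : Fin (d + 1) → EuclideanSpace ℝ (Fin d)) (ha : AffineIndependent ℝ a) :
    Filter.Tendsto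
      (fun q : EuclideanSpace ℝ (Fin d) =>
        ∑ i : Fin (d + 1),
          Metric.infDist q
            (affineSpan ℝ (a '' {j | j ≠ i}) : Set (EuclideanSpace ℝ (Fin d))))
      (Filter.cocompact (EuclideanSpace ℝ (Fin d))) Filter.atTop := by
  classical
  have hfr : finrank ℝ (EuclideanSpace ℝ (Fin d)) = d := finrank_euclideanSpace_fin
  set S : Fin (d + 1) → Submodule ℝ (EuclideanSpace ℝ (Fin d)) := fun i => vectorSpan ℝ (a '' {j | j ≠ i}) with hS
  -- the index sets as ranges of succAbove
  have himg : ∀ i : Fin (d + 1), a '' {j | j ≠ i} = Set.range (a ∘ i.succAbove) := by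
    intro i
    rw [Set.range_comp, Fin.range_succAbove]
    rfl
  -- finrank of the facet directions
  have hSrank : ∀ i, finrank ℝ (S i) = d - 1 := by
    intro i
    have hai : AffineIndependent ℝ (a ∘ i.succAbove) := ha.comp_embedding (Fin.succAboveEmb i)
    have hc : Fintype.card (Fin d) = (d - 1) + 1 := by simp; omega
    have h2 := hai.finrank_vectorSpan hc
    show finrank ℝ (vectorSpan ℝ (a '' {j | j ≠ i})) = d - 1
    rw [himg i]; exact h2
  -- unit normals
  have hn : ∀ i, ∃ v : (EuclideanSpace ℝ (Fin d)), v ∈ (S i)ᗮ ∧ ‖v‖ = 1 := by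
    intro i
    have hne : (S i)ᗮ ≠ ⊥ := by
      intro h
      have htop : S i = ⊤ := Submodule.orthogonal_eq_bot_iff.mp h
      have h2 := hSrank i
      rw [htop, finrank_top, hfr] at h2
      omega
    obtain ⟨v, hv, hv0⟩ := Submodule.ne_bot_iff _ |>.mp hne
    exact ⟨(‖v‖⁻¹ : ℝ) • v, Submodule.smul_mem _ _ hv, norm_smul_inv_norm (𝕜 := ℝ) hv0⟩
  choose n hnmem hnnorm using hn
  have hn0 : ∀ i, n i ≠ 0 := fun i h => by have h2 := hnnorm i; rw [h, norm_zero] at h2; exact one_ne_zero h2.symm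
  -- orthogonality of normals against directions
  have hinner0 : ∀ i, ∀ w ∈ S i, ⟪n i, w⟫ = 0 := by
    intro i w hw
    rw [real_inner_comm]
    exact (Submodule.mem_orthogonal _ _).mp (hnmem i) w hw
  -- the hyperplane equality
  have hSeq : ∀ i, (ℝ ∙ n i)ᗮ = S i := by
    intro i
    refine (Submodule.eq_of_le_of_finrank_eq ?_ ?_).symm
    · intro w hw
      rw [Submodule.mem_orthogonal]
      intro u hu
      obtain ⟨c, rfl⟩ := Submodule.mem_span_singleton.mp hu
      rw [real_inner_smul_left, hinner0 i w hw, mul_zero]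
    · have h1 : finrank ℝ (ℝ ∙ n i) = 1 := finrank_span_singleton (hn0 i)
      have h2 := Submodule.finrank_add_finrank_orthogonal (K := ℝ ∙ n i)
      rw [h1, hfr] at h2
      rw [hSrank i]
      omega
  have hmemS : ∀ i, ∀ v : (EuclideanSpace ℝ (Fin d)), ⟪n i, v⟫ = 0 → v ∈ S i := by
    intro i v hv
    rw [← hSeq i, Submodule.mem_orthogonal]
    intro u hu
    obtain ⟨c, rfl⟩ := Submodule.mem_span_singleton.mp hu
    rw [real_inner_smul_left, hv, mul_zero]
  have h01 : (0 : Fin (d + 1)) ≠ 1 := by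
    simp [Fin.ext_iff, Fin.val_one']
    omega
  -- the linear map v ↦ (⟪n i, v⟫)ᵢ
  set L : (EuclideanSpace ℝ (Fin d)) →ₗ[ℝ] (Fin (d + 1) → ℝ) :=
    LinearMap.pi (fun i => ((innerSL ℝ (n i)) : (EuclideanSpace ℝ (Fin d)) →L[ℝ] ℝ).toLinearMap) with hL
  have hLapp : ∀ v i, L v i = ⟪n i, v⟫ := fun v i => rfl
  -- injectivity via a basis argument
  have hker : LinearMap.ker L = ⊥ := by
    rw [LinearMap.ker_eq_bot']
    intro v hv
    have hv' : ∀ i, ⟪n i, v⟫ = 0 := fun i => congrFun hv i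
    have hmem : ∀ i, v ∈ S i := fun i => hmemS i v (hv' i)
    haveI : Nonempty {x : Fin (d + 1) // x ≠ 0} := ⟨⟨1, Ne.symm h01⟩⟩
    have hli : LinearIndependent ℝ fun j : {x : Fin (d + 1) // x ≠ 0} => a j - a 0 := by
      have := (affineIndependent_iff_linearIndependent_vsub ℝ a 0).mp ha
      simpa [vsub_eq_sub] using this
    have hcard : Fintype.card {x : Fin (d + 1) // x ≠ 0} = finrank ℝ (EuclideanSpace ℝ (Fin d)) := by
      rw [hfr]
      simp [Fintype.card_subtype_compl]
    let b := basisOfLinearIndependentOfCardEqFinrank hli hcard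
    have hb : ∀ j, b j = a j - a 0 := fun j => by
      simp [b, coe_basisOfLinearIndependentOfCardEqFinrank]
    have hz : ∀ j : {x : Fin (d + 1) // x ≠ 0}, b.repr v j = 0 := by
      intro j
      have h0mem : a 0 ∈ a '' {m | m ≠ (j : Fin (d + 1))} :=
        ⟨0, fun h => j.prop h.symm, rfl⟩
      have h1 : v ∈ Submodule.span ℝ ((· -ᵥ a 0) '' (a '' {m | m ≠ (j : Fin (d + 1))})) := by
        have h2 : v ∈ vectorSpan ℝ (a '' {m | m ≠ (j : Fin (d + 1))}) := hmem (j : Fin (d + 1))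
        rwa [vectorSpan_eq_span_vsub_set_right ℝ h0mem] at h2
      have hsub : ((· -ᵥ a 0) '' (a '' {m | m ≠ (j : Fin (d + 1))})) ⊆
          ↑(Submodule.span ℝ (b '' {t : {x : Fin (d + 1) // x ≠ 0} | (t : Fin (d + 1)) ≠ j})) := by
        rintro _ ⟨_, ⟨m, hm, rfl⟩, rfl⟩
        by_cases hm0 : m = 0
        · subst hm0
          simp only [vsub_eq_sub, sub_self]
          exact Submodule.zero_mem _
        · have : (⟨m, hm0⟩ : {x : Fin (d + 1) // x ≠ 0}) ∈
              {t : {x : Fin (d + 1) // x ≠ 0} | (t : Fin (d + 1)) ≠ j} := hm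
          have hbm : b ⟨m, hm0⟩ = a m - a 0 := hb _
          have := Submodule.subset_span (R := ℝ) (Set.mem_image_of_mem b this)
          rwa [hbm] at this
      have hvs : v ∈ Submodule.span ℝ
          (b '' {t : {x : Fin (d + 1) // x ≠ 0} | (t : Fin (d + 1)) ≠ j}) := by
        have := Submodule.span_le.mpr hsub
        exact this h1
      have hsupp := b.mem_span_image.mp hvs
      by_contra hne
      have hjsupp : j ∈ (b.repr v).support := Finsupp.mem_support_iff.mpr hne
      exact (hsupp hjsupp) rfl
    have : b.repr v = 0 := Finsupp.ext hz
    exact b.repr.map_eq_zero_iff.mp this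
  have hLc : Tendsto L (cocompact (EuclideanSpace ℝ (Fin d))) (cocompact (Fin (d + 1) → ℝ)) :=
    (LinearMap.isClosedEmbedding_of_injective hker).tendsto_cocompact
  -- base points on each facet
  set pt : Fin (d + 1) → Fin (d + 1) := fun i => if i = 0 then 1 else 0 with hptdef
  have hpt : ∀ i, pt i ≠ i := by
    intro i
    by_cases h : i = 0
    · subst h; simp [pt]; omega
    · simp [pt, h]; exact fun hh => h hh.symm
  set p : Fin (d + 1) → (EuclideanSpace ℝ (Fin d)) := fun i => a (pt i) with hp
  have hpmem : ∀ i, p i ∈ a '' {j | j ≠ i} := fun i => ⟨pt i, hpt i, rfl⟩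
  have hpaff : ∀ i, p i ∈ (affineSpan ℝ (a '' {j | j ≠ i}) : Set (EuclideanSpace ℝ (Fin d))) :=
    fun i => subset_affineSpan ℝ _ (hpmem i)
  set c : Fin (d + 1) → ℝ := fun i => ⟪n i, p i⟫ with hc
  set C : ℝ := ∑ i, |c i| with hC
  -- the ℓ¹-type function tends to atTop on the codomain
  have hg : Tendsto (fun y : Fin (d + 1) → ℝ => ∑ i, |y i - c i|)
      (cocompact (Fin (d + 1) → ℝ)) atTop := by
    have h1 : Tendsto (fun y : Fin (d + 1) → ℝ => ‖y‖ - C)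
        (cocompact (Fin (d + 1) → ℝ)) atTop := by
      simpa [sub_eq_add_neg] using
        tendsto_atTop_add_const_right (cocompact (Fin (d + 1) → ℝ)) (-C)
          tendsto_norm_cocompact_atTop
    refine tendsto_atTop_mono (fun y => ?_) h1
    have hnorm : ‖y‖ ≤ ∑ i, |y i| := by
      rw [pi_norm_le_iff_of_nonneg (Finset.sum_nonneg fun i _ => abs_nonneg _)]
      intro i
      rw [Real.norm_eq_abs]
      exact Finset.single_le_sum (fun j _ => abs_nonneg (y j)) (Finset.mem_univ i)
    have hsum : ∑ i, |y i| ≤ (∑ i, |y i - c i|) + C := by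
      rw [hC, ← Finset.sum_add_distrib]
      refine Finset.sum_le_sum fun i _ => ?_
      calc |y i| = |(y i - c i) + c i| := by ring_nf
        _ ≤ |y i - c i| + |c i| := abs_add_le _ _
    linarith
  -- conclusion
  refine tendsto_atTop_mono (fun q => ?_) (hg.comp hLc)
  simp only [Function.comp_apply]
  refine Finset.sum_le_sum fun i _ => ?_
  have hne : (affineSpan ℝ (a '' {j | j ≠ i}) : Set (EuclideanSpace ℝ (Fin d))).Nonempty := ⟨p i, hpaff i⟩
  refine my_le_infDist hne (fun x hx => ?_)
  have hxdir : x - p i ∈ S i := by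
    have h1 : x -ᵥ p i ∈ (affineSpan ℝ (a '' {j | j ≠ i})).direction :=
      AffineSubspace.vsub_mem_direction hx (hpaff i)
    rwa [direction_affineSpan, vsub_eq_sub] at h1
  have h0 : ⟪n i, x - p i⟫ = 0 := hinner0 i _ hxdir
  have key : L q i - c i = ⟪n i, q - x⟫ := by
    rw [hLapp]
    have : q - p i = (q - x) + (x - p i) := by abel
    rw [hc]
    calc ⟪n i, q⟫ - ⟪n i, p i⟫ = ⟪n i, q - p i⟫ := (inner_sub_right _ _ _).symm
      _ = ⟪n i, (q - x) + (x - p i)⟫ := by rw [this]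
      _ = ⟪n i, q - x⟫ + ⟪n i, x - p i⟫ := inner_add_right _ _ _
      _ = ⟪n i, q - x⟫ := by rw [h0, add_zero]
  rw [key]
  calc |⟪n i, q - x⟫| ≤ ‖n i‖ * ‖q - x‖ := abs_real_inner_le_norm _ _
    _ = dist q x := by rw [hnnorm i, one_mul, dist_eq_norm]
end

section
/- Suppose P contains d+1 affinely independent points. Then the hyperplane distance depth D_P vanishes at infinity in the sense that D_P(q) → ∞ as ‖q‖ → ∞; that is, D_P tends to atTop along the cocompact filter on ℝ^d. -/
open scoped Classical

/-- The set `S_P` of `d`-element affinely independent subsets of `P`;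
each determines an affine hyperplane of `ℝ^d` (its affine span). -/
noncomputable def hddSet (d : ℕ) (P : Finset (EuclideanSpace ℝ (Fin d))) :
    Finset (Finset (EuclideanSpace ℝ (Fin d))) :=
  (P.powersetCard d).filter
    (fun s => AffineIndependent ℝ
      (fun x : (s : Set (EuclideanSpace ℝ (Fin d))) => (x : EuclideanSpace ℝ (Fin d))))

/-- Hyperplane distance depth: the sum, over all hyperplanes determined by `P`,
of the Euclidean distance from `q` to the hyperplane. -/
noncomputable def hddDepth (d : ℕ) (P : Finset (EuclideanSpace ℝ (Fin d)))
    (q : EuclideanSpace ℝ (Fin d)) : ℝ :=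
  ∑ s ∈ hddSet d P,
    Metric.infDist q
      (affineSpan ℝ (s : Set (EuclideanSpace ℝ (Fin d))) : Set (EuclideanSpace ℝ (Fin d)))

/-! The `d + 1` points form an affine basis `b` of `ℝ^d`, and each facet `b '' {i}ᶜ` spans one of
the hyperplanes counted by `D_P`. The barycentric coordinate `b.coord i` is Lipschitz and vanishes
on that hyperplane, so `|b.coord i q|` is at most a constant times the distance from `q` to it.
Since `q = ∑ i, b.coord i q • b i`, the norm `‖q‖` is at most a constant times
`∑ i, |b.coord i q|`, hence `D_P(q)` grows at least linearly in `‖q‖`. -/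

open Filter Metric Finset

theorem LipschitzWith.abs_le_mul_infDist {α : Type*} [PseudoMetricSpace α] {f : α → ℝ}
    {K : NNReal} (hf : LipschitzWith K f) {s : Set α} (hs : s.Nonempty)
    (hfs : ∀ y ∈ s, f y = 0) (x : α) : |f x| ≤ K * infDist x s := by
  have : Nonempty s := hs.to_subtype
  calc |f x| ≤ ⨅ y : s, K * dist x y := le_ciInf fun y => by
        simpa [hfs y y.2, Real.dist_eq] using hf.dist_le_mul x y
    _ = K * infDist x s := by rw [infDist_eq_iInf, ← Real.mul_iInf_of_nonneg K.coe_nonneg]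

namespace AffineBasis

theorem coord_eq_zero_of_mem_affineSpan_image_compl {ι k V P : Type*} [Ring k]
    [AddCommGroup V] [Module k V] [AddTorsor V P] (b : AffineBasis ι k P) {i : ι} {q : P}
    (hq : q ∈ affineSpan k (b '' {i}ᶜ)) : b.coord i q = 0 := by
  have hle : affineSpan k (b '' {i}ᶜ) ≤ (affineSpan k {(0 : k)}).comap (b.coord i) := by
    rw [affineSpan_le]
    rintro _ ⟨j, hj, rfl⟩
    simp [b.coord_apply_ne (Ne.symm hj)]
  simpa using hle hq

variable {ι V : Type*} [Fintype ι] [NormedAddCommGroup V] [NormedSpace ℝ V]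

theorem norm_le_sum_abs_coord_mul (b : AffineBasis ι ℝ V) (q : V) :
    ‖q‖ ≤ (∑ i, |b.coord i q|) * ∑ i, ‖b i‖ := by
  calc ‖q‖ = ‖∑ i, b.coord i q • b i‖ := by rw [b.linear_combination_coord_eq_self q]
    _ ≤ ∑ i, |b.coord i q| * ‖b i‖ := by
        simpa only [norm_smul, Real.norm_eq_abs] using norm_sum_le univ fun i => b.coord i q • b i
    _ ≤ ∑ i, (∑ j, |b.coord j q|) * ‖b i‖ := by
        gcongr with i
        exact single_le_sum (f := fun j => |b.coord j q|) (fun j _ => abs_nonneg _) (mem_univ i)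
    _ = (∑ i, |b.coord i q|) * ∑ i, ‖b i‖ := (mul_sum _ _ _).symm

theorem tendsto_sum_abs_coord_cocompact [ProperSpace V] (b : AffineBasis ι ℝ V) :
    Tendsto (fun q => ∑ i, |b.coord i q|) (cocompact V) atTop := by
  have hM : 0 < ∑ i, ‖b i‖ + 1 := by positivity
  refine tendsto_atTop_mono (fun q => ?_) (tendsto_norm_cocompact_atTop.atTop_div_const hM)
  rw [div_le_iff₀ hM]
  calc ‖q‖ ≤ (∑ i, |b.coord i q|) * ∑ i, ‖b i‖ := b.norm_le_sum_abs_coord_mul q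
    _ ≤ (∑ i, |b.coord i q|) * (∑ i, ‖b i‖ + 1) := by gcongr; linarith

theorem exists_sum_abs_coord_le_mul_sum_infDist [FiniteDimensional ℝ V] [Nontrivial ι]
    (b : AffineBasis ι ℝ V) : ∃ K : ℝ, 0 < K ∧ ∀ q,
      ∑ i, |b.coord i q| ≤ K * ∑ i, infDist q (affineSpan ℝ (b '' {i}ᶜ) : Set V) := by
  obtain ⟨K, hK⟩ := b.coords.lipschitzWith_of_finiteDimensional
  refine ⟨K + 1, by positivity, fun q => ?_⟩
  rw [mul_sum]
  refine sum_le_sum fun i _ => ?_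
  obtain ⟨j, hj⟩ := exists_ne i
  have hcoord : LipschitzWith (K + 1) (b.coord i) :=
    ((LipschitzWith.eval i).comp hK).weaken (by simp)
  have hne : (affineSpan ℝ (b '' {i}ᶜ) : Set V).Nonempty :=
    ⟨b j, subset_affineSpan ℝ _ ⟨j, hj, rfl⟩⟩
  exact_mod_cast hcoord.abs_le_mul_infDist hne
    (fun y hy => b.coord_eq_zero_of_mem_affineSpan_image_compl hy) q

theorem tendsto_sum_infDist_affineSpan_image_compl_cocompact [FiniteDimensional ℝ V]
    [Nontrivial ι] (b : AffineBasis ι ℝ V) :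
    Tendsto (fun q => ∑ i, infDist q (affineSpan ℝ (b '' {i}ᶜ) : Set V)) (cocompact V) atTop := by
  obtain ⟨K, hK, hle⟩ := b.exists_sum_abs_coord_le_mul_sum_infDist
  refine tendsto_atTop_mono (fun q => ?_) (b.tendsto_sum_abs_coord_cocompact.atTop_div_const hK)
  rw [div_le_iff₀' hK]
  exact hle q

end AffineBasis

section HyperplaneDistanceDepth

variable {d : ℕ} {P : Finset (EuclideanSpace ℝ (Fin d))}
  {a : Fin (d + 1) → EuclideanSpace ℝ (Fin d)}

theorem image_erase_mem_hddSet (ha : AffineIndependent ℝ a) (haP : ∀ i, a i ∈ P)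
    (i : Fin (d + 1)) : (univ.erase i).image a ∈ hddSet d P := by
  rw [hddSet, mem_filter, mem_powersetCard, image_subset_iff,
    card_image_of_injective _ ha.injective, card_erase_of_mem (mem_univ i)]
  refine ⟨⟨fun j _ => haP j, by simp⟩, ha.range.mono ?_⟩
  simp

theorem sum_infDist_affineSpan_image_compl_le_hddDepth (ha : AffineIndependent ℝ a)
    (haP : ∀ i, a i ∈ P) (q : EuclideanSpace ℝ (Fin d)) :
    ∑ i, infDist q (affineSpan ℝ (a '' {i}ᶜ) : Set (EuclideanSpace ℝ (Fin d))) ≤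
      hddDepth d P q := by
  have hinj : Function.Injective fun i => (univ.erase i).image a := by
    intro i j hij
    by_contra hne
    have : a j ∈ (univ.erase i).image a := mem_image_of_mem a (by simp [Ne.symm hne])
    simp [hij, ha.injective.eq_iff] at this
  calc ∑ i, infDist q (affineSpan ℝ (a '' {i}ᶜ) : Set (EuclideanSpace ℝ (Fin d)))
      = ∑ s ∈ univ.image fun i => (univ.erase i).image a,
          infDist q (affineSpan ℝ (s : Set (EuclideanSpace ℝ (Fin d))) : Set _) := by
        rw [sum_image hinj.injOn]
        simp [Set.compl_eq_univ_sdiff]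
    _ ≤ hddDepth d P q := by
        refine sum_le_sum_of_subset_of_nonneg ?_ fun _ _ _ => infDist_nonneg
        simpa [image_subset_iff] using image_erase_mem_hddSet ha haP

end HyperplaneDistanceDepth

/-- If `P` contains `d+1` affinely independent points, then the hyperplane distance depth
tends to infinity as the query point goes to infinity (along the cocompact filter). -/
theorem hddDepth_tendsto_atTop_cocompact (d : ℕ) (hd : 1 ≤ d)
    (P : Finset (EuclideanSpace ℝ (Fin d)))
    (h : ∃ a : Fin (d + 1) → EuclideanSpace ℝ (Fin d),
      AffineIndependent ℝ a ∧ ∀ i, a i ∈ P) :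
    Filter.Tendsto (hddDepth d P)
      (Filter.cocompact (EuclideanSpace ℝ (Fin d))) Filter.atTop := by
  obtain ⟨a, ha, haP⟩ := h
  have : Nontrivial (Fin (d + 1)) := Fin.nontrivial_iff_two_le.2 (by omega)
  have hspan : affineSpan ℝ (Set.range a) = ⊤ := by
    simp [ha.affineSpan_eq_top_iff_card_eq_finrank_add_one]
  let b : AffineBasis (Fin (d + 1)) ℝ (EuclideanSpace ℝ (Fin d)) := ⟨a, ha, hspan⟩
  exact tendsto_atTop_mono (sum_infDist_affineSpan_image_compl_le_hddDepth ha haP)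
    b.tendsto_sum_infDist_affineSpan_image_compl_cocompact
end

section
/- Suppose P contains d+1 affinely independent points. Then an HDD median of P exists: there is a point q ∈ ℝ^d such that D_P(q) ≤ D_P(x) for all x ∈ ℝ^d. -/
open scoped Classical

/-- If `P` contains `d+1` affinely independent points, then an HDD median of `P` exists. -/
theorem hddMedian_exists (d : ℕ) (hd : 1 ≤ d)
    (P : Finset (EuclideanSpace ℝ (Fin d)))
    (h : ∃ a : Fin (d + 1) → EuclideanSpace ℝ (Fin d),
      AffineIndependent ℝ a ∧ ∀ i, a i ∈ P) :
    ∃ q : EuclideanSpace ℝ (Fin d), ∀ x : EuclideanSpace ℝ (Fin d),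
      hddDepth d P q ≤ hddDepth d P x := by
  classical
  obtain ⟨a, ha, haP⟩ := h
  have hainj : Function.Injective a := ha.injective
  have hcont : Continuous (hddDepth d P) :=
    continuous_finset_sum _ fun s _ => Metric.continuous_infDist_pt _
  -- build the affine basis
  have htot : affineSpan ℝ (Set.range a) = ⊤ := by
    rw [ha.affineSpan_eq_top_iff_card_eq_finrank_add_one]
    simp [finrank_euclideanSpace_fin]
  let b : AffineBasis (Fin (d + 1)) ℝ (EuclideanSpace ℝ (Fin d)) := ⟨a, ha, htot⟩
  have hba : ∀ j, b j = a j := fun j => rfl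
  -- the face hyperplanes
  let s : Fin (d + 1) → Finset (EuclideanSpace ℝ (Fin d)) := fun i => (Finset.univ.erase i).image a
  have hscard : ∀ i, (s i).card = d := by
    intro i
    rw [Finset.card_image_of_injective _ hainj,
      Finset.card_erase_of_mem (Finset.mem_univ i), Finset.card_univ, Fintype.card_fin]
    omega
  have hsmem : ∀ i, s i ∈ hddSet d P := by
    intro i
    rw [hddSet, Finset.mem_filter, Finset.mem_powersetCard]
    refine ⟨⟨?_, hscard i⟩, ?_⟩
    · intro x hx
      obtain ⟨j, _, rfl⟩ := Finset.mem_image.mp hx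
      exact haP j
    · refine ha.range.mono ?_
      intro x hx
      obtain ⟨j, _, rfl⟩ := Finset.mem_image.mp hx
      exact Set.mem_range_self j
  have hsinj : Function.Injective s := by
    intro i j hij
    by_contra hne
    have hj : a j ∈ s i :=
      Finset.mem_image_of_mem a (Finset.mem_erase.mpr ⟨fun hji => hne hji.symm, Finset.mem_univ j⟩)
    rw [hij] at hj
    obtain ⟨k, hk, hkj⟩ := Finset.mem_image.mp hj
    exact (Finset.mem_erase.mp hk).1 (hainj hkj)
  have hsne : ∀ i, ((s i : Set (EuclideanSpace ℝ (Fin d)))).Nonempty := by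
    intro i
    have : 0 < (s i).card := by rw [hscard i]; exact hd
    obtain ⟨x, hx⟩ := Finset.card_pos.mp this
    exact ⟨x, hx⟩
  have hspanne : ∀ i, ((affineSpan ℝ (s i : Set (EuclideanSpace ℝ (Fin d))) : Set (EuclideanSpace ℝ (Fin d)))).Nonempty := by
    intro i
    obtain ⟨x, hx⟩ := hsne i
    exact ⟨x, subset_affineSpan ℝ _ hx⟩
  -- barycentric coordinate `i` vanishes on the `i`-th face hyperplane
  have hcoord0 : ∀ i, ∀ y ∈ (affineSpan ℝ (s i : Set (EuclideanSpace ℝ (Fin d))) : Set (EuclideanSpace ℝ (Fin d))), b.coord i y = 0 := by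
    intro i y hy
    have hle : affineSpan ℝ (s i : Set (EuclideanSpace ℝ (Fin d))) ≤
        AffineSubspace.comap (b.coord i) (AffineSubspace.mk' (0 : ℝ) ⊥) := by
      rw [affineSpan_le]
      intro x hx
      obtain ⟨j, hj, rfl⟩ := Finset.mem_image.mp hx
      have hji : j ≠ i := (Finset.mem_erase.mp hj).1
      have : b.coord i (b j) = 0 := by
        rw [b.coord_apply]
        simp [Ne.symm hji]
      rw [hba] at this
      simp only [Set.mem_preimage, AffineSubspace.mem_coe, AffineSubspace.coe_comap,
        AffineSubspace.mem_comap, this]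
      exact AffineSubspace.self_mem_mk' _ _
    have h2 := hle hy
    simp only [AffineSubspace.mem_coe, AffineSubspace.mem_comap,
      AffineSubspace.mem_mk', vsub_eq_sub, sub_zero, Submodule.mem_bot] at h2
    exact h2
  -- Lipschitz constants for coordinates
  let ℓ : Fin (d + 1) → ((EuclideanSpace ℝ (Fin d)) →L[ℝ] ℝ) := fun i => LinearMap.toContinuousLinearMap (b.coord i).linear
  let L : ℝ := (Finset.univ.sup' Finset.univ_nonempty fun i => ‖ℓ i‖) + 1
  have hLpos : 0 < L := by
    have h0 : (0 : ℝ) ≤ ‖ℓ 0‖ := norm_nonneg _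
    have := Finset.le_sup' (fun i => ‖ℓ i‖) (Finset.mem_univ (0 : Fin (d + 1)))
    unfold L; linarith
  have hLle : ∀ i, ‖ℓ i‖ ≤ L := by
    intro i
    have := Finset.le_sup' (fun i => ‖ℓ i‖) (Finset.mem_univ i)
    unfold L; linarith
  -- key pointwise bound
  have key : ∀ (i : Fin (d + 1)) (x : (EuclideanSpace ℝ (Fin d))),
      |b.coord i x| ≤ L * Metric.infDist x (affineSpan ℝ (s i : Set (EuclideanSpace ℝ (Fin d))) : Set (EuclideanSpace ℝ (Fin d))) := by
    intro i x
    by_contra hcon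
    push_neg at hcon
    have h1 : Metric.infDist x (affineSpan ℝ (s i : Set (EuclideanSpace ℝ (Fin d))) : Set (EuclideanSpace ℝ (Fin d))) < |b.coord i x| / L :=
      (lt_div_iff₀' hLpos).mpr hcon
    obtain ⟨y, hy, hdy⟩ := (Metric.infDist_lt_iff (hspanne i)).mp h1
    have hy0 : b.coord i y = 0 := hcoord0 i y hy
    have hlin : b.coord i x - b.coord i y = (b.coord i).linear (x - y) := by
      have := (b.coord i).linearMap_vsub x y
      simpa [vsub_eq_sub] using this.symm
    have hbound : |b.coord i x| ≤ L * dist x y := by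
      have h2 : |b.coord i x| = ‖(ℓ i) (x - y)‖ := by
        rw [show ((ℓ i) (x - y) : ℝ) = (b.coord i).linear (x - y) from rfl, ← hlin, hy0]
        simp [Real.norm_eq_abs]
      rw [h2, dist_eq_norm]
      calc ‖(ℓ i) (x - y)‖ ≤ ‖ℓ i‖ * ‖x - y‖ := (ℓ i).le_opNorm _
        _ ≤ L * ‖x - y‖ := by
            exact mul_le_mul_of_nonneg_right (hLle i) (norm_nonneg _)
    have : |b.coord i x| < |b.coord i x| := by
      calc |b.coord i x| ≤ L * dist x y := hbound
        _ < L * (|b.coord i x| / L) := by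
            exact mul_lt_mul_of_pos_left hdy hLpos
        _ = |b.coord i x| := by field_simp
    exact lt_irrefl _ this
  -- bound on the norm via coordinates
  let M : ℝ := (Finset.univ.sup' Finset.univ_nonempty fun i => ‖a i‖) + 1
  have hMpos : 0 < M := by
    have h0 : (0 : ℝ) ≤ ‖a 0‖ := norm_nonneg _
    have := Finset.le_sup' (fun i => ‖a i‖) (Finset.mem_univ (0 : Fin (d + 1)))
    unfold M; linarith
  have hMle : ∀ i, ‖a i‖ ≤ M := by
    intro i
    have := Finset.le_sup' (fun i => ‖a i‖) (Finset.mem_univ i)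
    unfold M; linarith
  have hnorm : ∀ x : (EuclideanSpace ℝ (Fin d)), ‖x‖ ≤ M * ∑ i, |b.coord i x| := by
    intro x
    conv_lhs => rw [← b.linear_combination_coord_eq_self x]
    calc ‖∑ i, b.coord i x • b i‖ ≤ ∑ i, ‖b.coord i x • b i‖ := norm_sum_le _ _
      _ ≤ ∑ i, |b.coord i x| * M := by
          refine Finset.sum_le_sum fun i _ => ?_
          rw [norm_smul, Real.norm_eq_abs, hba]
          exact mul_le_mul_of_nonneg_left (hMle i) (abs_nonneg _)
      _ = M * ∑ i, |b.coord i x| := by rw [← Finset.sum_mul, mul_comm]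
  -- coercivity
  have main : ∀ x : (EuclideanSpace ℝ (Fin d)), ‖x‖ / (M * L) ≤ hddDepth d P x := by
    intro x
    have h1 : ∑ i : Fin (d + 1),
        Metric.infDist x (affineSpan ℝ (s i : Set (EuclideanSpace ℝ (Fin d))) : Set (EuclideanSpace ℝ (Fin d))) ≤ hddDepth d P x := by
      rw [hddDepth, show (∑ i : Fin (d + 1), Metric.infDist x
          (affineSpan ℝ (s i : Set (EuclideanSpace ℝ (Fin d))) : Set (EuclideanSpace ℝ (Fin d)))) =
          ∑ t ∈ Finset.univ.image s, Metric.infDist x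
          (affineSpan ℝ (t : Set (EuclideanSpace ℝ (Fin d))) : Set (EuclideanSpace ℝ (Fin d))) from
        (Finset.sum_image (f := fun t : Finset (EuclideanSpace ℝ (Fin d)) =>
          Metric.infDist x (affineSpan ℝ (t : Set (EuclideanSpace ℝ (Fin d))) :
            Set (EuclideanSpace ℝ (Fin d)))) (fun i _ j _ hij => hsinj hij)).symm]
      refine Finset.sum_le_sum_of_subset_of_nonneg ?_ fun t _ _ => Metric.infDist_nonneg
      intro t ht
      obtain ⟨i, _, rfl⟩ := Finset.mem_image.mp ht
      exact hsmem i
    have h2 : ∑ i, |b.coord i x| ≤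
        L * ∑ i : Fin (d + 1), Metric.infDist x (affineSpan ℝ (s i : Set (EuclideanSpace ℝ (Fin d))) : Set (EuclideanSpace ℝ (Fin d))) := by
      rw [Finset.mul_sum]
      exact Finset.sum_le_sum fun i _ => key i x
    have h3 : ‖x‖ ≤ M * L * hddDepth d P x := by
      calc ‖x‖ ≤ M * ∑ i, |b.coord i x| := hnorm x
        _ ≤ M * (L * ∑ i : Fin (d + 1),
            Metric.infDist x (affineSpan ℝ (s i : Set (EuclideanSpace ℝ (Fin d))) : Set (EuclideanSpace ℝ (Fin d)))) :=
          mul_le_mul_of_nonneg_left h2 hMpos.le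
        _ ≤ M * (L * hddDepth d P x) :=
          mul_le_mul_of_nonneg_left (mul_le_mul_of_nonneg_left h1 hLpos.le) hMpos.le
        _ = M * L * hddDepth d P x := by ring
    rw [div_le_iff₀ (mul_pos hMpos hLpos)]
    linarith [h3]
  have hcoer : Filter.Tendsto (hddDepth d P) (Filter.cocompact (EuclideanSpace ℝ (Fin d))) Filter.atTop := by
    have hn : Filter.Tendsto (fun x : (EuclideanSpace ℝ (Fin d)) => ‖x‖ / (M * L)) (Filter.cocompact (EuclideanSpace ℝ (Fin d))) Filter.atTop :=
      (tendsto_norm_cocompact_atTop).atTop_div_const (mul_pos hMpos hLpos)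
    exact Filter.tendsto_atTop_mono main hn
  exact hcont.exists_forall_le hcoer
end

section
/- Suppose P contains d+1 affinely independent points. Then there exists an HDD median q of P that is an intersection point of d hyperplanes determined by P: there exist d-element affinely independent subsets s₁, …, s_d ∈ S_P such that the intersection of the affine spans of s₁, …, s_d is exactly the singleton {q}. -/
/-!
Every hyperplane `affineSpan s`, `s ∈ S_P`, is `{x | ⟪n, x⟫ = c}` for a unit vector `n`, and the
distance to it is `|⟪n, x⟫ - c|`; so `D_P` is a sum of absolute values of affine functions. The
facets of the simplex spanned by the `d + 1` independent points already have normals spanning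
`ℝ^d`, so `D_P` is coercive and has a minimizer. Take a minimizer `q` lying on a maximal set of
hyperplanes. If their normals did not span, move `q` along a direction `v` parallel to all of
them: up to the first hyperplane met, `D_P` is affine along the line, and as `q` is an interior
minimum it is constant, so that first point is a minimizer on strictly more hyperplanes. Hence the
normals of the hyperplanes through `q` span, and `d` independent ones among them cut out `{q}`.
-/

open scoped Classical

open Filter Finset Module Submodule Topology
open scoped RealInnerProductSpace

theorem abs_add_eq_of_abs_le {b u : ℝ} (h : |u| ≤ |b|) : |b + u| = |b| + Real.sign b * u := by
  rcases lt_trichotomy b 0 with hb | rfl | hb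
  · have := abs_le.1 (h.trans_eq (abs_of_neg hb))
    rw [Real.sign_of_neg hb, abs_of_neg hb, abs_of_nonpos (by linarith)]
    ring
  · simp_all
  · have := abs_le.1 (h.trans_eq (abs_of_pos hb))
    rw [Real.sign_of_pos hb, abs_of_pos hb, abs_of_nonneg (by linarith)]
    ring

theorem Module.Basis.exists_fin_range_subset_of_span_eq_top {K V : Type*} [DivisionRing K]
    [AddCommGroup V] [Module K V] [FiniteDimensional K V] {s : Set V} (hs : span K s = ⊤)
    {d : ℕ} (hd : finrank K V = d) : ∃ b : Basis (Fin d) K V, Set.range b ⊆ s := by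
  let b := Basis.ofSpan hs.ge
  refine ⟨b.reindex (b.indexEquiv (finBasisOfFinrankEq K V hd)), ?_⟩
  rw [Basis.range_reindex]
  exact Basis.ofSpan_subset hs.ge

theorem AffineBasis.eq_zero_of_forall_mem_vectorSpan_image_compl {ι k V P : Type*} [Ring k]
    [AddCommGroup V] [Module k V] [AddTorsor V P] [Finite ι] (b : AffineBasis ι k P) {v : V}
    (hv : ∀ i, v ∈ vectorSpan k (b '' {i}ᶜ)) : v = 0 := by
  have hlin : ∀ i, (b.coord i).linear v = 0 := fun i => by
    have hmap := Submodule.mem_map_of_mem (f := (b.coord i).linear) (hv i)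
    rw [AffineMap.map_vectorSpan] at hmap
    have hzero : b.coord i '' (b '' {i}ᶜ) ⊆ {0} := by
      rintro _ ⟨_, ⟨j, hj, rfl⟩, rfl⟩
      exact b.coord_apply_ne (Ne.symm hj)
    simpa [vectorSpan_singleton] using vectorSpan_mono k hzero hmap
  have ⟨i₀⟩ := b.nonempty
  have hfix : v +ᵥ b i₀ = b i₀ :=
    b.ext_elem fun i => by rw [AffineMap.map_vadd, hlin i, zero_vadd]
  rwa [← vadd_right_cancel_iff (b i₀), zero_vadd]

section InnerProductSpace

variable {E : Type*} [NormedAddCommGroup E] [InnerProductSpace ℝ E]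

theorem Submodule.span_eq_top_iff_forall_inner_eq_zero [FiniteDimensional ℝ E] {s : Set E} :
    span ℝ s = ⊤ ↔ ∀ v, (∀ u ∈ s, ⟪u, v⟫ = 0) → v = 0 := by
  rw [← orthogonal_eq_bot_iff, eq_bot_iff]
  refine forall_congr' fun v => imp_congr_left ?_
  rw [← span_singleton_le_iff_mem, ← isOrtho_iff_le, isOrtho_comm, isOrtho_span]
  simp

theorem AffineSubspace.exists_unit_normal [FiniteDimensional ℝ E] {H : AffineSubspace ℝ E}
    (hH : finrank ℝ H.direction + 1 = finrank ℝ E) :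
    ∃ n : E, ‖n‖ = 1 ∧ H.direction = (ℝ ∙ n)ᗮ := by
  have hperp : finrank ℝ H.directionᗮ = 1 := by
    have := H.direction.finrank_add_finrank_orthogonal
    omega
  have hne : H.directionᗮ ≠ ⊥ := fun h => by rw [← finrank_eq_zero] at h; omega
  obtain ⟨u, hu, hu0⟩ := exists_mem_ne_zero_of_ne_bot hne
  refine ⟨‖u‖⁻¹ • u, norm_smul_inv_norm hu0, ?_⟩
  have hspan : (ℝ ∙ (‖u‖⁻¹ • u)) = H.directionᗮ :=
    eq_of_le_of_finrank_eq ((span_singleton_le_iff_mem _ _).2 (smul_mem _ _ hu))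
      (by rw [finrank_span_singleton (by simpa using hu0), hperp])
  rw [hspan, orthogonal_orthogonal]

theorem AffineSubspace.mem_iff_inner_eq {H : AffineSubspace ℝ E} {n p : E}
    (hn : H.direction = (ℝ ∙ n)ᗮ) (hp : p ∈ H) (x : E) : x ∈ H ↔ ⟪n, x⟫ = ⟪n, p⟫ := by
  rw [← AffineSubspace.vsub_right_mem_direction_iff_mem hp, hn,
    mem_orthogonal_singleton_iff_inner_right, vsub_eq_sub, inner_sub_right, sub_eq_zero]

theorem infDist_setOf_inner_eq {n : E} (hn : ‖n‖ = 1) (c : ℝ) (x : E) :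
    Metric.infDist x {y | ⟪n, y⟫ = c} = |⟪n, x⟫ - c| := by
  have hproj : x - (⟪n, x⟫ - c) • n ∈ {y | ⟪n, y⟫ = c} := by
    simp [inner_sub_right, real_inner_smul_right, hn]
  refine le_antisymm ?_ ((Metric.le_infDist ⟨_, hproj⟩).2 fun y (hy : ⟪n, y⟫ = c) => ?_)
  · calc Metric.infDist x {y | ⟪n, y⟫ = c} ≤ dist x (x - (⟪n, x⟫ - c) • n) :=
          Metric.infDist_le_dist_of_mem hproj
      _ = |⟪n, x⟫ - c| := by simp [norm_smul, hn]
  · calc |⟪n, x⟫ - c| = |⟪n, x - y⟫| := by rw [inner_sub_right, hy]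
      _ ≤ ‖n‖ * ‖x - y‖ := abs_real_inner_le_norm n (x - y)
      _ = dist x y := by rw [hn, one_mul, dist_eq_norm]

end InnerProductSpace

section SumAbsDev

variable {E ι : Type*} [NormedAddCommGroup E] [InnerProductSpace ℝ E] [Fintype ι]
  (n : ι → E) (c : ι → ℝ)

noncomputable def sumAbsDev (x : E) : ℝ := ∑ i, |⟪n i, x⟫ - c i|

noncomputable def activeSet (x : E) : Finset ι := {i | ⟪n i, x⟫ = c i}

theorem continuous_sumAbsDev : Continuous (sumAbsDev n c) := by
  unfold sumAbsDev
  fun_prop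

theorem tendsto_sumAbsDev_cocompact [FiniteDimensional ℝ E] (hn : span ℝ (Set.range n) = ⊤) :
    Tendsto (sumAbsDev n c) (cocompact E) atTop := by
  let L : E →ₗ[ℝ] ι → ℝ := LinearMap.pi fun i => innerₛₗ ℝ (n i)
  have hL : LinearMap.ker L = ⊥ := LinearMap.ker_eq_bot'.2 fun v hv =>
    span_eq_top_iff_forall_inner_eq_zero.1 hn v (by rintro _ ⟨i, rfl⟩; exact congrFun hv i)
  have hemb : IsClosedEmbedding fun x => L x - c :=
    (Homeomorph.subRight c).isClosedEmbedding.comp (LinearMap.isClosedEmbedding_of_injective hL)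
  refine tendsto_atTop_mono (fun x => ?_) (tendsto_norm_cocompact_atTop.comp hemb.tendsto_cocompact)
  refine (pi_norm_le_iff_of_nonneg (by unfold sumAbsDev; positivity)).2 fun i => ?_
  exact single_le_sum (f := fun i => |⟪n i, x⟫ - c i|) (fun i _ => abs_nonneg _) (mem_univ i)

theorem sumAbsDev_add_smul {q v : E} {t : ℝ}
    (ht : ∀ i, |⟪n i, v⟫ * t| ≤ |⟪n i, q⟫ - c i|) :
    sumAbsDev n c (q + t • v) =
      sumAbsDev n c q + (∑ i, Real.sign (⟪n i, q⟫ - c i) * ⟪n i, v⟫) * t := by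
  rw [sumAbsDev, sumAbsDev, sum_mul, ← sum_add_distrib]
  refine sum_congr rfl fun i _ => ?_
  rw [inner_add_right, real_inner_smul_right, add_sub_right_comm, mul_comm t,
    abs_add_eq_of_abs_le (ht i), mul_assoc]

theorem exists_min_sumAbsDev_activeSet_ssubset {q v : E}
    (hq : ∀ x, sumAbsDev n c q ≤ sumAbsDev n c x) (hv : ∀ i ∈ activeSet n c q, ⟪n i, v⟫ = 0)
    (hj : ∃ j, ⟪n j, v⟫ ≠ 0) :
    ∃ q', (∀ x, sumAbsDev n c q' ≤ sumAbsDev n c x) ∧ activeSet n c q ⊂ activeSet n c q' := by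
  obtain ⟨j, hjv, hjmin⟩ := (univ.filter fun i => ⟪n i, v⟫ ≠ 0).exists_min_image
    (fun i => |(⟪n i, q⟫ - c i) / ⟪n i, v⟫|) (by simpa [Finset.Nonempty] using hj)
  simp only [mem_filter, mem_univ, true_and] at hjv hjmin
  -- `q + t • v` is the first point of the line `q + ℝ v` on a hyperplane not through `q`
  set t := -((⟪n j, q⟫ - c j) / ⟪n j, v⟫) with ht
  have hsmall : ∀ s, |s| ≤ |t| → ∀ i, |⟪n i, v⟫ * s| ≤ |⟪n i, q⟫ - c i| := by
    intro s hs i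
    by_cases hi : ⟪n i, v⟫ = 0
    · simp [hi]
    calc |⟪n i, v⟫ * s| ≤ |⟪n i, v⟫| * |(⟪n i, q⟫ - c i) / ⟪n i, v⟫| := by
          rw [abs_mul]
          exact mul_le_mul_of_nonneg_left (hs.trans ((abs_neg _).trans_le (hjmin i hi)))
            (abs_nonneg _)
      _ = |⟪n i, q⟫ - c i| := by rw [abs_div, mul_div_cancel₀ _ (abs_ne_zero.2 hi)]
  have hplus := sumAbsDev_add_smul n c (hsmall t le_rfl)
  have hminus := sumAbsDev_add_smul n c (hsmall (-t) (abs_neg t).le)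
  -- affine on `[q - t • v, q + t • v]` and minimal at the midpoint, hence constant
  have hslope : (∑ i, Real.sign (⟪n i, q⟫ - c i) * ⟪n i, v⟫) * t = 0 := by
    have := hq (q + t • v)
    have := hq (q + (-t) • v)
    linarith [mul_neg (∑ i, Real.sign (⟪n i, q⟫ - c i) * ⟪n i, v⟫) t]
  refine ⟨q + t • v, fun x => by rw [hplus, hslope, add_zero]; exact hq x, ?_⟩
  have hsub : activeSet n c q ⊆ activeSet n c (q + t • v) := fun i hi => by
    simp only [activeSet, mem_filter, mem_univ, true_and] at hi ⊢
    rw [inner_add_right, real_inner_smul_right, hv i (by simpa [activeSet] using hi), hi]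
    ring
  refine (ssubset_iff_of_subset hsub).2 ⟨j, ?_, fun hj' => hjv (hv j hj')⟩
  simp only [activeSet, mem_filter, mem_univ, true_and]
  rw [inner_add_right, real_inner_smul_right, ht, neg_mul, div_mul_cancel₀ _ hjv]
  ring

theorem exists_min_sumAbsDev_span_activeSet_eq_top [FiniteDimensional ℝ E]
    (hn : span ℝ (Set.range n) = ⊤) :
    ∃ q, (∀ x, sumAbsDev n c q ≤ sumAbsDev n c x) ∧ span ℝ (n '' activeSet n c q) = ⊤ := by
  obtain ⟨q₀, hq₀⟩ := (continuous_sumAbsDev n c).exists_forall_le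
    (tendsto_sumAbsDev_cocompact n c hn)
  obtain ⟨_, hmax⟩ := (Set.toFinite {A : Finset ι |
    ∃ q, (∀ x, sumAbsDev n c q ≤ sumAbsDev n c x) ∧ activeSet n c q = A}).exists_maximal
    ⟨_, q₀, hq₀, rfl⟩
  obtain ⟨q, hq, rfl⟩ := hmax.prop
  refine ⟨q, hq, span_eq_top_iff_forall_inner_eq_zero.2 fun v hv => ?_⟩
  by_contra hv0
  obtain ⟨j, hj⟩ : ∃ j, ⟪n j, v⟫ ≠ 0 := by
    by_contra! h
    exact hv0 (span_eq_top_iff_forall_inner_eq_zero.1 hn v (by rintro _ ⟨i, rfl⟩; exact h i))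
  obtain ⟨q', hq', hlt⟩ :=
    exists_min_sumAbsDev_activeSet_ssubset n c hq (fun i hi => hv _ ⟨i, hi, rfl⟩) ⟨j, hj⟩
  exact hmax.not_gt ⟨q', hq', rfl⟩ hlt

end SumAbsDev

section HddSet

variable {d : ℕ} {P s : Finset (EuclideanSpace ℝ (Fin d))}

theorem mem_hddSet : s ∈ hddSet d P ↔ s ⊆ P ∧ s.card = d ∧
    AffineIndependent ℝ
      (fun x : (s : Set (EuclideanSpace ℝ (Fin d))) => (x : EuclideanSpace ℝ (Fin d))) := by
  rw [hddSet, mem_filter, mem_powersetCard, and_assoc]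

theorem exists_unit_normal_of_mem_hddSet (hd : 1 ≤ d) (hs : s ∈ hddSet d P) :
    ∃ (n : EuclideanSpace ℝ (Fin d)) (c : ℝ), ‖n‖ = 1 ∧
      vectorSpan ℝ (s : Set (EuclideanSpace ℝ (Fin d))) = (ℝ ∙ n)ᗮ ∧
      (affineSpan ℝ (s : Set (EuclideanSpace ℝ (Fin d))) : Set _) = {x | ⟪n, x⟫ = c} := by
  obtain ⟨-, hcard, hind⟩ := mem_hddSet.1 hs
  obtain ⟨p, hp⟩ := card_pos.1 (hcard ▸ hd)
  have hrank : finrank ℝ (vectorSpan ℝ (s : Set (EuclideanSpace ℝ (Fin d)))) = d - 1 := by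
    have := hind.finrank_vectorSpan (n := d - 1) (by simp; omega)
    rwa [Subtype.range_coe] at this
  obtain ⟨n, hn, hdir⟩ := (affineSpan ℝ (s : Set (EuclideanSpace ℝ (Fin d)))).exists_unit_normal
    (by rw [direction_affineSpan, hrank, finrank_euclideanSpace_fin]; omega)
  rw [direction_affineSpan] at hdir
  exact ⟨n, ⟪n, p⟫, hn, hdir, Set.ext (AffineSubspace.mem_iff_inner_eq
    (by rwa [direction_affineSpan]) (subset_affineSpan ℝ _ hp))⟩

theorem image_compl_singleton_mem_hddSet {a : Fin (d + 1) → EuclideanSpace ℝ (Fin d)}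
    (ha : AffineIndependent ℝ a) (haP : ∀ i, a i ∈ P) (i : Fin (d + 1)) :
    image a {i}ᶜ ∈ hddSet d P := by
  refine mem_hddSet.2 ⟨image_subset_iff.2 fun j _ => haP j, ?_, ?_⟩
  · rw [card_image_of_injective _ ha.injective, card_compl, card_singleton, Fintype.card_fin]
    omega
  · exact ha.range.mono (by simp)

theorem eq_zero_of_forall_mem_vectorSpan_of_mem_hddSet
    {a : Fin (d + 1) → EuclideanSpace ℝ (Fin d)} (ha : AffineIndependent ℝ a)
    (haP : ∀ i, a i ∈ P) {v : EuclideanSpace ℝ (Fin d)}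
    (hv : ∀ s ∈ hddSet d P, v ∈ vectorSpan ℝ (s : Set (EuclideanSpace ℝ (Fin d)))) : v = 0 := by
  let b : AffineBasis (Fin (d + 1)) ℝ (EuclideanSpace ℝ (Fin d)) :=
    ⟨a, ha, ha.affineSpan_eq_top_iff_card_eq_finrank_add_one.2 (by simp)⟩
  refine b.eq_zero_of_forall_mem_vectorSpan_image_compl fun i => ?_
  show v ∈ vectorSpan ℝ (a '' {i}ᶜ)
  simpa using hv _ (image_compl_singleton_mem_hddSet ha haP i)

end HddSet

/-- If `P` contains `d+1` affinely independent points, then some HDD median of `P`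
is the unique intersection point of `d` hyperplanes determined by `P`. -/
theorem hddMedian_on_intersection (d : ℕ) (hd : 1 ≤ d)
    (P : Finset (EuclideanSpace ℝ (Fin d)))
    (h : ∃ a : Fin (d + 1) → EuclideanSpace ℝ (Fin d),
      AffineIndependent ℝ a ∧ ∀ i, a i ∈ P) :
    ∃ q : EuclideanSpace ℝ (Fin d),
      (∀ x : EuclideanSpace ℝ (Fin d), hddDepth d P q ≤ hddDepth d P x) ∧
      ∃ s : Fin d → Finset (EuclideanSpace ℝ (Fin d)),
        (∀ i, s i ∈ hddSet d P) ∧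
        (⋂ i, (affineSpan ℝ ((s i : Set (EuclideanSpace ℝ (Fin d)))) :
          Set (EuclideanSpace ℝ (Fin d)))) = {q} := by
  obtain ⟨a, ha, haP⟩ := h
  choose n c hn hdir hspan using fun s : hddSet d P => exists_unit_normal_of_mem_hddSet hd s.2
  have hdepth : ∀ x, hddDepth d P x = sumAbsDev n c x := fun x => by
    rw [hddDepth, ← sum_coe_sort]
    exact sum_congr rfl fun s _ => by rw [hspan s, infDist_setOf_inner_eq (hn s)]
  have htop : span ℝ (Set.range n) = ⊤ := span_eq_top_iff_forall_inner_eq_zero.2 fun v hv =>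
    eq_zero_of_forall_mem_vectorSpan_of_mem_hddSet ha haP fun s hs => by
      rw [hdir ⟨s, hs⟩, mem_orthogonal_singleton_iff_inner_right]
      exact hv _ ⟨_, rfl⟩
  obtain ⟨q, hq, hqspan⟩ := exists_min_sumAbsDev_span_activeSet_eq_top n c htop
  obtain ⟨b, hb⟩ := Basis.exists_fin_range_subset_of_span_eq_top hqspan finrank_euclideanSpace_fin
  choose σ hσ hbσ using fun k => hb ⟨k, rfl⟩
  have hqσ : ∀ k, ⟪n (σ k), q⟫ = c (σ k) := fun k => by simpa [activeSet] using hσ k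
  refine ⟨q, fun x => by simpa only [hdepth] using hq x, fun k => σ k, fun k => (σ k).2, ?_⟩
  ext x
  simp only [Set.mem_iInter, hspan, Set.mem_singleton_iff]
  refine ⟨fun hx => InnerProductSpace.ext_inner_left_basis b fun k => ?_, fun hx k => hx ▸ hqσ k⟩
  rw [← hbσ k, hx k, hqσ k]
end

section
/- Suppose P is centrally symmetric about a point c ∈ ℝ^d, i.e., for every p ∈ P the reflected point 2·c − p also belongs to P. Then the hyperplane distance depth is invariant under the point reflection about c: for every q ∈ ℝ^d, D_P(2·c − q) = D_P(q). -/
open scoped Classical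

/-- If `P` is centrally symmetric about `c`, then the hyperplane distance depth is
invariant under point reflection about `c`. -/
theorem hddDepth_reflection_invariant (d : ℕ) (hd : 1 ≤ d)
    (P : Finset (EuclideanSpace ℝ (Fin d))) (c : EuclideanSpace ℝ (Fin d))
    (hsym : ∀ p ∈ P, (2 : ℝ) • c - p ∈ P) (q : EuclideanSpace ℝ (Fin d)) :
    hddDepth d P ((2 : ℝ) • c - q) = hddDepth d P q := by
  set e := AffineIsometryEquiv.pointReflection ℝ c with he
  have hef : ∀ x : EuclideanSpace ℝ (Fin d), e x = (2 : ℝ) • c - x := by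
    intro x
    simp only [he, AffineIsometryEquiv.pointReflection_apply, vsub_eq_sub, vadd_eq_add, two_smul]
    abel
  have hinv : ∀ x, e (e x) = x := fun x =>
    AffineIsometryEquiv.pointReflection_involutive (𝕜 := ℝ) c x
  have hmem : ∀ s ∈ hddSet d P, s.image e ∈ hddSet d P := by
    intro s hs
    simp only [hddSet, Finset.mem_filter, Finset.mem_powersetCard] at hs ⊢
    obtain ⟨⟨hsub, hcard⟩, hai⟩ := hs
    refine ⟨⟨?_, ?_⟩, ?_⟩
    · intro x hx
      simp only [Finset.mem_image] at hx
      obtain ⟨y, hy, rfl⟩ := hx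
      rw [hef]
      exact hsym y (hsub hy)
    · rw [Finset.card_image_of_injective _ e.injective, hcard]
    · have hcoe : ((s.image e : Finset (EuclideanSpace ℝ (Fin d))) : Set _) =
          e '' (s : Set _) := by simp [Finset.coe_image]
      have h2 : AffineIndependent ℝ (fun x : (s : Set (EuclideanSpace ℝ (Fin d))) =>
          e x) := hai.map' e.toAffineEquiv.toAffineMap e.toAffineEquiv.injective
      have h3 := h2.range
      have hrange : Set.range (fun x : (s : Set (EuclideanSpace ℝ (Fin d))) => e ↑x) =
          ⇑e '' (s : Set (EuclideanSpace ℝ (Fin d))) := by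
        ext y; simp
      rw [hrange, ← hcoe] at h3
      exact h3
  unfold hddDepth
  refine Finset.sum_nbij' (fun s => s.image e) (fun s => s.image e) hmem hmem ?_ ?_ ?_
  · intro s hs
    ext x
    simp only [Finset.mem_image]
    constructor
    · rintro ⟨y, ⟨z, hz, rfl⟩, rfl⟩; rw [hinv]; exact hz
    · intro hx; exact ⟨e x, ⟨x, hx, rfl⟩, hinv x⟩
  · intro s hs
    ext x
    simp only [Finset.mem_image]
    constructor
    · rintro ⟨y, ⟨z, hz, rfl⟩, rfl⟩; rw [hinv]; exact hz
    · intro hx; exact ⟨e x, ⟨x, hx, rfl⟩, hinv x⟩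
  · intro s hs
    have hspan : ((affineSpan ℝ ((Finset.image (⇑e) s : Finset (EuclideanSpace ℝ (Fin d))) :
        Set (EuclideanSpace ℝ (Fin d)))) : Set (EuclideanSpace ℝ (Fin d))) =
        ⇑e '' ((affineSpan ℝ ((s : Set (EuclideanSpace ℝ (Fin d))))) :
          Set (EuclideanSpace ℝ (Fin d))) := by
      rw [Finset.coe_image,
        show ⇑e = ⇑e.toAffineEquiv.toAffineMap from rfl,
        ← AffineSubspace.map_span e.toAffineEquiv.toAffineMap]
      rfl
    rw [hspan, ← hef q]
    have h4 := Metric.infDist_image (x := e q)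
      (t := (affineSpan ℝ (s : Set (EuclideanSpace ℝ (Fin d))) :
        Set (EuclideanSpace ℝ (Fin d)))) e.isometry
    rw [hinv q] at h4
    exact h4.symm
end

section
/- Suppose P is centrally symmetric about a point c ∈ ℝ^d, i.e., for every p ∈ P the reflected point 2·c − p also belongs to P. Then c is an HDD median of P: D_P(c) ≤ D_P(x) for all x ∈ ℝ^d. -/
open scoped Classical

/-- Midpoint convexity of the distance to a nonempty affine subspace. -/
lemma infDist_midpoint_le {E : Type*} [NormedAddCommGroup E] [NormedSpace ℝ E]
    (A : AffineSubspace ℝ E) (hA : (A : Set E).Nonempty) (x y : E) :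
    Metric.infDist (midpoint ℝ x y) (A : Set E)
      ≤ (Metric.infDist x A + Metric.infDist y A) / 2 := by
  refine le_of_forall_pos_le_add (fun ε hε => ?_)
  obtain ⟨a, ha, hda⟩ := (Metric.infDist_lt_iff hA).1
    (lt_add_of_pos_right _ (half_pos hε) : Metric.infDist x (A:Set E) < _ + ε/2)
  obtain ⟨b, hb, hdb⟩ := (Metric.infDist_lt_iff hA).1
    (lt_add_of_pos_right _ (half_pos hε) : Metric.infDist y (A:Set E) < _ + ε/2)
  have hm : midpoint ℝ a b ∈ (A : Set E) :=
    A.convex.segment_subset ha hb (midpoint_mem_segment a b)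
  calc Metric.infDist (midpoint ℝ x y) (A : Set E)
      ≤ dist (midpoint ℝ x y) (midpoint ℝ a b) := Metric.infDist_le_dist_of_mem hm
    _ ≤ (dist x a + dist y b) / 2 := dist_midpoint_midpoint_le _ _ _ _
    _ ≤ _ := by linarith

/-- If `P` is centrally symmetric about `c`, then `c` is an HDD median of `P`. -/
theorem hddMedian_center_of_symmetry (d : ℕ) (hd : 1 ≤ d)
    (P : Finset (EuclideanSpace ℝ (Fin d))) (c : EuclideanSpace ℝ (Fin d))
    (hsym : ∀ p ∈ P, (2 : ℝ) • c - p ∈ P) :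
    ∀ x : EuclideanSpace ℝ (Fin d), hddDepth d P c ≤ hddDepth d P x := by
  intro x
  let E := EuclideanSpace ℝ (Fin d)
  let σ : EuclideanSpace ℝ (Fin d) ≃ᵃⁱ[ℝ] EuclideanSpace ℝ (Fin d) :=
    AffineIsometryEquiv.pointReflection ℝ c
  have hσ : ∀ p : EuclideanSpace ℝ (Fin d), σ p = (2 : ℝ) • c - p := by
    intro p
    show (c -ᵥ p) +ᵥ c = (2 : ℝ) • c - p
    rw [two_smul]
    show (c - p) + c = c + c - p
    abel
  have hσσ : ∀ p : EuclideanSpace ℝ (Fin d), σ (σ p) = p := fun p =>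
    (AffineIsometryEquiv.pointReflection_involutive (𝕜 := ℝ) c) p
  have hσinj : Function.Injective (σ : EuclideanSpace ℝ (Fin d) → EuclideanSpace ℝ (Fin d)) :=
    σ.injective
  have hfun : (σ : EuclideanSpace ℝ (Fin d) → EuclideanSpace ℝ (Fin d))
      = ⇑(σ.toAffineEquiv.toAffineMap) := rfl
  -- membership of images
  have hmem : ∀ s ∈ hddSet d P, s.image (σ : EuclideanSpace ℝ (Fin d) → _) ∈ hddSet d P := by
    intro s hs
    rw [hddSet, Finset.mem_filter, Finset.mem_powersetCard] at hs ⊢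
    obtain ⟨⟨hsub, hcard⟩, hindep⟩ := hs
    refine ⟨⟨?_, ?_⟩, ?_⟩
    · intro p hp
      obtain ⟨q, hq, rfl⟩ := Finset.mem_image.1 hp
      rw [hσ]
      exact hsym q (hsub hq)
    · rw [Finset.card_image_of_injective _ hσinj, hcard]
    · have hindep' : AffineIndependent ℝ
          (Subtype.val : {z // z ∈ (s : Set (EuclideanSpace ℝ (Fin d)))} →
            EuclideanSpace ℝ (Fin d)) := hindep
      have h2 := (σ.toAffineEquiv.affineIndependent_set_of_eq_iff
        (s := (s : Set (EuclideanSpace ℝ (Fin d))))).2 hindep'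
      rw [Finset.coe_image]
      exact h2
  -- each span is nonempty
  have hne : ∀ s ∈ hddSet d P,
      ((affineSpan ℝ (s : Set (EuclideanSpace ℝ (Fin d)))) :
        Set (EuclideanSpace ℝ (Fin d))).Nonempty := by
    intro s hs
    rw [hddSet, Finset.mem_filter, Finset.mem_powersetCard] at hs
    have hsne : s.Nonempty := Finset.card_pos.1 (by omega)
    exact (affineSpan_nonempty ℝ).2 (by exact_mod_cast hsne.to_set)
  -- image of span
  have hspan : ∀ s : Finset (EuclideanSpace ℝ (Fin d)),
      ((affineSpan ℝ ((s.image (σ : EuclideanSpace ℝ (Fin d) → _) : Finset _) :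
          Set (EuclideanSpace ℝ (Fin d)))) : Set (EuclideanSpace ℝ (Fin d)))
        = (σ : EuclideanSpace ℝ (Fin d) → _) ''
            ((affineSpan ℝ (s : Set (EuclideanSpace ℝ (Fin d)))) : Set _) := by
    intro s
    rw [Finset.coe_image, hfun,
      ← AffineSubspace.map_span σ.toAffineEquiv.toAffineMap
        (s : Set (EuclideanSpace ℝ (Fin d)))]
    rfl
  -- reindexing: sum of distances from σ x equals hddDepth at x
  have hreindex : ∑ s ∈ hddSet d P,
      Metric.infDist (σ x) ((affineSpan ℝ (s : Set (EuclideanSpace ℝ (Fin d)))) : Set _)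
        = hddDepth d P x := by
    rw [hddDepth]
    refine Finset.sum_nbij' (fun s => s.image (σ : EuclideanSpace ℝ (Fin d) → _))
      (fun s => s.image (σ : EuclideanSpace ℝ (Fin d) → _)) hmem hmem ?_ ?_ ?_
    · intro s _
      ext p
      simp only [Finset.mem_image]
      constructor
      · rintro ⟨q, ⟨r, hr, rfl⟩, rfl⟩; rwa [hσσ]
      · intro hp; exact ⟨σ p, ⟨p, hp, rfl⟩, hσσ p⟩
    · intro s _
      ext p
      simp only [Finset.mem_image]
      constructor
      · rintro ⟨q, ⟨r, hr, rfl⟩, rfl⟩; rwa [hσσ]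
      · intro hp; exact ⟨σ p, ⟨p, hp, rfl⟩, hσσ p⟩
    · intro s _
      rw [hspan s]
      have h := Metric.infDist_image (Φ := (σ : EuclideanSpace ℝ (Fin d) → _))
        σ.isometry (x := σ x)
        (t := ((affineSpan ℝ (s : Set (EuclideanSpace ℝ (Fin d)))) : Set _))
      rw [hσσ] at h
      exact h.symm
  -- the midpoint identity
  have hmid : midpoint ℝ x (σ x) = c := by
    rw [hσ, midpoint_eq_smul_add, invOf_eq_inv]
    module
  -- main estimate
  rw [hddDepth]
  have key : ∀ s ∈ hddSet d P,
      Metric.infDist c ((affineSpan ℝ (s : Set (EuclideanSpace ℝ (Fin d)))) : Set _)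
        ≤ (Metric.infDist x ((affineSpan ℝ (s : Set (EuclideanSpace ℝ (Fin d)))) : Set _)
            + Metric.infDist (σ x)
                ((affineSpan ℝ (s : Set (EuclideanSpace ℝ (Fin d)))) : Set _)) / 2 := by
    intro s hs
    rw [← hmid]
    exact infDist_midpoint_le _ (hne s hs) _ _
  calc ∑ s ∈ hddSet d P,
        Metric.infDist c ((affineSpan ℝ (s : Set (EuclideanSpace ℝ (Fin d)))) : Set _)
      ≤ ∑ s ∈ hddSet d P,
          (Metric.infDist x ((affineSpan ℝ (s : Set (EuclideanSpace ℝ (Fin d)))) : Set _)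
            + Metric.infDist (σ x)
                ((affineSpan ℝ (s : Set (EuclideanSpace ℝ (Fin d)))) : Set _)) / 2 :=
        Finset.sum_le_sum key
    _ = (hddDepth d P x + ∑ s ∈ hddSet d P,
          Metric.infDist (σ x)
            ((affineSpan ℝ (s : Set (EuclideanSpace ℝ (Fin d)))) : Set _)) / 2 := by
        rw [hddDepth, ← Finset.sum_div, Finset.sum_add_distrib]
    _ = hddDepth d P x := by rw [hreindex]; ring
end

section
/- Hyperplane distance depth is not k-stable for any constant k: for every k > 0 there exist a nonempty finite set P ⊆ ℝ, a point q ∈ ℝ, a real ε > 0, and an injective map f : ℝ → ℝ with |f(x) − x| ≤ ε for all x ∈ ℝ, such that k · |∑_{p ∈ P} |q − p| − ∑_{p ∈ P} |f(q) − f(p)|| > ε. -/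
/-- Hyperplane distance depth (in dimension 1, where `D(q, P) = ∑_{p ∈ P} |q - p|`)
is not `k`-stable for any constant `k > 0`. -/
theorem hdd_not_k_stable (k : ℝ) (hk : 0 < k) :
    ∃ (P : Finset ℝ) (q : ℝ) (ε : ℝ) (f : ℝ → ℝ),
      P.Nonempty ∧ 0 < ε ∧ Function.Injective f ∧ (∀ x : ℝ, |f x - x| ≤ ε) ∧
      ε < k * |(∑ p ∈ P, |q - p|) - (∑ p ∈ P, |f q - f p|)| := by
  obtain ⟨n, hn⟩ := exists_nat_gt (1 / k)
  have hn0 : 0 < n := by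
    by_contra h
    push_neg at h
    interval_cases n
    · simp at hn
      exact absurd hn (not_lt.2 (le_of_lt (by positivity)))
  have hkn : 1 < k * n := by
    rw [div_lt_iff₀ hk] at hn
    linarith [mul_comm k (n : ℝ)]
  set f : ℝ → ℝ := fun x => if 0 < x then x + 1 else x with hf
  refine ⟨(Finset.range n).image (fun i : ℕ => (i : ℝ) + 1), 0, 1, f, ?_, one_pos, ?_, ?_, ?_⟩
  · exact ⟨1, Finset.mem_image.2 ⟨0, Finset.mem_range.2 hn0, by norm_num⟩⟩
  · intro a b hab
    simp only [hf] at hab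
    split_ifs at hab with h1 h2 h2 <;> linarith
  · intro x
    simp only [hf]
    split_ifs <;> simp
  · have hinj : Function.Injective (fun i : ℕ => (i : ℝ) + 1) := by
      intro a b h; simpa using h
    rw [Finset.sum_image (fun a _ b _ h => hinj h),
        Finset.sum_image (fun a _ b _ h => hinj h)]
    have h1 : ∀ i ∈ Finset.range n, |(0 : ℝ) - ((i : ℝ) + 1)| = (i : ℝ) + 1 := by
      intro i _
      rw [abs_sub_comm]
      simp
      positivity
    have h2 : ∀ i ∈ Finset.range n, |f 0 - f ((i : ℝ) + 1)| = (i : ℝ) + 2 := by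
      intro i _
      have : f 0 = 0 := by simp [hf]
      have hp : f ((i : ℝ) + 1) = (i : ℝ) + 2 := by
        simp only [hf]
        rw [if_pos (by positivity)]
        ring
      rw [this, hp, abs_sub_comm]
      simp
      positivity
    rw [Finset.sum_congr rfl h1, Finset.sum_congr rfl h2]
    have : (∑ i ∈ Finset.range n, ((i : ℝ) + 1)) - ∑ i ∈ Finset.range n, ((i : ℝ) + 2)
        = -(n : ℝ) := by
      rw [← Finset.sum_sub_distrib]
      simp
      ring
    rw [this, abs_neg, abs_of_nonneg (by positivity)]
    exact hkn
end

section
/- The HDD median is not equivariant under affine transformations: there exist a finite set P ⊆ ℝ², an invertible linear map T : ℝ² → ℝ², and a point q ∈ ℝ² such that q is an HDD median of P, but T(q) is not an HDD median of the image set T(P). -/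
open scoped Classical

/-!
For a triangle, `hddDepth` is the sum of the distances to the three side lines. Weighted by the
side lengths, the signed distances add up to twice the area, so the depth is minimised at the
vertex opposite the longest side. For the triangle `(-4, 0), (4, 0), (0, 3)` (sides `8, 5, 5`)
that vertex is the apex `(0, 3)`. Stretching the plane vertically by `3` gives the triangle
`(-4, 0), (4, 0), (0, 9)`, whose legs `√97` are now longer than the base: the image apex has
depth at least `9`, its distance to the base, while the vertex `(4, 0)` has depth at most `8`.
-/

open scoped RealInnerProductSpace
open Metric

local notation "ℝ²" => EuclideanSpace ℝ (Fin 2)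

section

variable {F : Type*} [NormedAddCommGroup F] [InnerProductSpace ℝ F]

theorem inner_eq_of_mem_affineSpan {s : Set F} {n : F} {c : ℝ} (h : ∀ y ∈ s, ⟪y, n⟫ = c)
    {x : F} (hx : x ∈ affineSpan ℝ s) : ⟪x, n⟫ = c := by
  refine affineSpan_induction hx h fun a u v w hu hv hw => ?_
  rw [vsub_eq_sub, vadd_eq_add, inner_add_left, real_inner_smul_left, inner_sub_left, hu, hv,
    hw, sub_self, mul_zero, zero_add]

theorem sub_le_infDist_affineSpan {s : Set F} (hs : s.Nonempty) {n : F} (hn : ‖n‖ ≤ 1) {c : ℝ}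
    (h : ∀ y ∈ s, ⟪y, n⟫ = c) (x : F) : ⟪x, n⟫ - c ≤ infDist x (affineSpan ℝ s) := by
  refine (le_infDist (hs.mono (subset_affineSpan ℝ s))).2 fun y hy => ?_
  calc ⟪x, n⟫ - c = ⟪x - y, n⟫ := by rw [inner_sub_left, inner_eq_of_mem_affineSpan h hy]
    _ ≤ ‖x - y‖ * ‖n‖ := real_inner_le_norm _ _
    _ ≤ ‖x - y‖ := mul_le_of_le_one_right (norm_nonneg _) hn
    _ = dist x y := (dist_eq_norm x y).symm

theorem sub_le_infDist_affineSpan_pair {p q n : F} {c : ℝ} (hn : ‖n‖ ≤ 1) (hp : ⟪p, n⟫ = c)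
    (hq : ⟪q, n⟫ = c) (x : F) : ⟪x, n⟫ - c ≤ infDist x line[ℝ, p, q] :=
  sub_le_infDist_affineSpan (Set.insert_nonempty p {q}) hn (by simp [hp, hq]) x

end

theorem hddSet_two (P : Finset ℝ²) :
    hddSet 2 P = P.powersetCard 2 := by
  refine Finset.filter_true_of_mem fun s hs => ?_
  obtain ⟨x, y, hxy, rfl⟩ := Finset.card_eq_two.1 (Finset.mem_powersetCard.1 hs).2
  have := (affineIndependent_of_ne ℝ hxy).range
  rwa [Matrix.range_cons, Matrix.range_cons, Matrix.range_empty, Set.union_empty,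
    ← Set.insert_eq, ← Finset.coe_pair] at this

theorem Finset.powersetCard_two_triple {α : Type*} [DecidableEq α] {a b c : α} (hab : a ≠ b)
    (hac : a ≠ c) (hbc : b ≠ c) :
    ({a, b, c} : Finset α).powersetCard 2 = {{a, b}, {a, c}, {b, c}} := by
  rw [Finset.powersetCard_succ_insert (by simp [hab, hac]),
    Finset.powersetCard_succ_insert (by simp [hbc]), Finset.powersetCard_eq_empty.2 (by simp)]
  simp [Finset.powersetCard_one, Finset.union_comm]

theorem hddDepth_two_triple {a b c : ℝ²} (hab : a ≠ b) (hac : a ≠ c) (hbc : b ≠ c) (x : ℝ²) :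
    hddDepth 2 {a, b, c} x =
      infDist x line[ℝ, a, b] + infDist x line[ℝ, a, c] + infDist x line[ℝ, b, c] := by
  have hc : c ∉ ({a, b} : Finset _) := by simp [hac.symm, hbc.symm]
  have hab_ac : ({a, b} : Finset _) ≠ {a, c} := (ne_of_mem_of_not_mem' (by simp) hc).symm
  have hab_bc : ({a, b} : Finset _) ≠ {b, c} := (ne_of_mem_of_not_mem' (by simp) hc).symm
  have hac_bc : ({a, c} : Finset _) ≠ {b, c} :=
    ne_of_mem_of_not_mem' (by simp) (by simp [hab, hac] : a ∉ ({b, c} : Finset _))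
  rw [hddDepth, hddSet_two, Finset.powersetCard_two_triple hab hac hbc,
    Finset.sum_insert (by simp [hab_ac, hab_bc]), Finset.sum_pair hac_bc, add_assoc]
  simp only [Finset.coe_pair]

@[simp]
theorem norm_vec₂ (a b : ℝ) : ‖!₂[a, b]‖ = √(a ^ 2 + b ^ 2) := by
  simp [EuclideanSpace.norm_eq, Fin.sum_univ_two, sq_abs]

@[simp]
theorem inner_vec₂ (a b c d : ℝ) : ⟪!₂[a, b], !₂[c, d]⟫ = a * c + b * d := by
  simp [PiLp.inner_apply, Fin.sum_univ_two, mul_comm]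

@[simp]
theorem dist_vec₂ (a b c d : ℝ) : dist !₂[a, b] !₂[c, d] = √((a - c) ^ 2 + (b - d) ^ 2) := by
  simp [EuclideanSpace.dist_eq, Fin.sum_univ_two, Real.dist_eq, sq_abs]

noncomputable def stretchSnd (k : ℝ) (hk : k ≠ 0) : ℝ² ≃ₗ[ℝ] ℝ² where
  toFun v := !₂[v 0, k * v 1]
  invFun v := !₂[v 0, k⁻¹ * v 1]
  map_add' v w := by ext i; fin_cases i <;> simp [mul_add]
  map_smul' r v := by ext i; fin_cases i <;> simp [mul_left_comm]
  left_inv v := by ext i; fin_cases i <;> simp [hk]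
  right_inv v := by ext i; fin_cases i <;> simp [hk]

@[simp]
theorem stretchSnd_vec₂ (k : ℝ) (hk : k ≠ 0) (a b : ℝ) : stretchSnd k hk !₂[a, b] = !₂[a, k * b] :=
  rfl

noncomputable def triangle : Finset ℝ² := {!₂[-4, 0], !₂[4, 0], !₂[0, 3]}

theorem hddDepth_triangle_apex_le (x : ℝ²) :
    hddDepth 2 triangle !₂[0, 3] ≤ hddDepth 2 triangle x := by
  rw [triangle, hddDepth_two_triple (by norm_num) (by norm_num) (by norm_num),
    hddDepth_two_triple (by norm_num) (by norm_num) (by norm_num),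
    infDist_zero_of_mem (right_mem_affineSpan_pair ℝ _ _),
    infDist_zero_of_mem (right_mem_affineSpan_pair ℝ _ _)]
  have h_apex : infDist (!₂[0, 3] : ℝ²) line[ℝ, (!₂[-4, 0] : ℝ²), !₂[4, 0]] ≤ 3 := by
    have hmid : (!₂[0, 0] : ℝ²) ∈ line[ℝ, (!₂[-4, 0] : ℝ²), !₂[4, 0]] := by
      convert AffineMap.lineMap_mem_affineSpan_pair (1 / 2 : ℝ) _ _ using 1
      ext i; fin_cases i <;> norm_num [AffineMap.lineMap_apply_module]
    exact (infDist_le_dist_of_mem hmid).trans_eq (by norm_num)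
  have h_ab := sub_le_infDist_affineSpan_pair (n := !₂[0, 1]) (c := 0) (p := (!₂[-4, 0] : ℝ²))
    (q := !₂[4, 0]) (by norm_num) (by norm_num) (by norm_num) x
  have h_ac := sub_le_infDist_affineSpan_pair (n := !₂[3 / 8, -1 / 2]) (c := -3 / 2)
    (p := (!₂[-4, 0] : ℝ²)) (q := !₂[0, 3]) (by norm_num) (by norm_num) (by norm_num) x
  have h_bc := sub_le_infDist_affineSpan_pair (n := !₂[-3 / 8, -1 / 2]) (c := -3 / 2)
    (p := (!₂[4, 0] : ℝ²)) (q := !₂[0, 3]) (by norm_num) (by norm_num) (by norm_num) x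
  -- The normals are the sides' unit normals scaled by (side length) / 8, so they sum to zero.
  have h_normals : ⟪x, !₂[0, 1]⟫ + ⟪x, !₂[3 / 8, -1 / 2]⟫ + ⟪x, !₂[-3 / 8, -1 / 2]⟫ = 0 := by
    have h_sum : (!₂[0, 1] + !₂[3 / 8, -1 / 2] + !₂[-3 / 8, -1 / 2] : ℝ²) = 0 := by
      ext i; fin_cases i <;> norm_num
    rw [← inner_add_right, ← inner_add_right, h_sum, inner_zero_right]
  linarith

theorem triangle_image_stretchSnd :
    triangle.image (stretchSnd 3 three_ne_zero) = {!₂[-4, 0], !₂[4, 0], !₂[0, 9]} := by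
  norm_num [triangle]

theorem hddDepth_stretched_triangle_lt :
    hddDepth 2 {!₂[-4, 0], !₂[4, 0], !₂[0, 9]} !₂[4, 0] <
      hddDepth 2 {!₂[-4, 0], !₂[4, 0], !₂[0, 9]} !₂[0, 9] := by
  rw [hddDepth_two_triple (by norm_num) (by norm_num) (by norm_num),
    hddDepth_two_triple (by norm_num) (by norm_num) (by norm_num),
    infDist_zero_of_mem (right_mem_affineSpan_pair ℝ _ _),
    infDist_zero_of_mem (left_mem_affineSpan_pair ℝ _ _)]
  have h_side : infDist (!₂[4, 0] : ℝ²) line[ℝ, (!₂[-4, 0] : ℝ²), !₂[0, 9]] ≤ 8 :=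
    (infDist_le_dist_of_mem (left_mem_affineSpan_pair ℝ _ _)).trans_eq (by norm_num)
  have h_base := sub_le_infDist_affineSpan_pair (n := !₂[0, 1]) (c := 0) (p := (!₂[-4, 0] : ℝ²))
    (q := !₂[4, 0]) (by norm_num) (by norm_num) (by norm_num) !₂[0, 9]
  have h_ac := infDist_nonneg (x := (!₂[0, 9] : ℝ²)) (s := line[ℝ, (!₂[-4, 0] : ℝ²), !₂[0, 9]])
  have h_bc := infDist_nonneg (x := (!₂[0, 9] : ℝ²)) (s := line[ℝ, (!₂[4, 0] : ℝ²), !₂[0, 9]])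
  norm_num at h_base
  linarith

/-- The HDD median is not equivariant under (invertible linear) affine transformations:
there are a finite set `P ⊆ ℝ²`, an invertible linear map `T`, and an HDD median `q` of `P`
such that `T q` is not an HDD median of `T(P)`. -/
theorem hddMedian_not_affine_equivariant :
    ∃ (P : Finset (EuclideanSpace ℝ (Fin 2)))
      (T : EuclideanSpace ℝ (Fin 2) ≃ₗ[ℝ] EuclideanSpace ℝ (Fin 2))
      (q : EuclideanSpace ℝ (Fin 2)),
      (∀ x, hddDepth 2 P q ≤ hddDepth 2 P x) ∧
      ¬ (∀ x, hddDepth 2 (P.image T) (T q) ≤ hddDepth 2 (P.image T) x) := by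
  refine ⟨triangle, stretchSnd 3 three_ne_zero, !₂[0, 3], hddDepth_triangle_apex_le, fun h => ?_⟩
  rw [triangle_image_stretchSnd, stretchSnd_vec₂] at h
  exact (h !₂[4, 0]).not_gt (by norm_num [hddDepth_stretched_triangle_lt])
end

section
/- Let E be a real inner product space, let f : E → ℝ be a convex function, let w ∈ E with w ≠ 0 and c ∈ ℝ, and let H = {x ∈ E : ⟪w, x⟫ = c} be the corresponding affine hyperplane. Suppose x₀ ∈ H minimizes f over H, i.e., f(x₀) ≤ f(y) for all y ∈ H. Then the strict sublevel set {y ∈ E : f(y) < f(x₀)} lies entirely in one open half-space determined by H: for all a, b ∈ E with f(a) < f(x₀) and f(b) < f(x₀), the numbers ⟪w, a⟫ − c and ⟪w, b⟫ − c are nonzero and have the same sign. -/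
/-! A convex function's strict sublevel set `{y | f y < f x₀}` is convex, and it misses the
hyperplane `⟪w, ·⟫ = c` because `x₀` minimizes `f` there. Its image under the linear functional
`⟪w, ·⟫` is then a convex subset of `ℝ`, i.e. an interval, avoiding `c`; so `c` cannot lie between
`⟪w, a⟫` and `⟪w, b⟫` for two points `a`, `b` of the sublevel set. -/

open Set

lemma mem_uIcc_of_sub_mul_sub_nonpos {R : Type*} [Ring R] [LinearOrder R] [IsStrictOrderedRing R]
    {a b x : R} (h : (a - x) * (b - x) ≤ 0) : x ∈ uIcc a b := by
  rcases mul_nonpos_iff.1 h with ⟨ha, hb⟩ | ⟨ha, hb⟩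
  · exact mem_uIcc_of_ge (sub_nonpos.1 hb) (sub_nonneg.1 ha)
  · exact mem_uIcc_of_le (sub_nonpos.1 ha) (sub_nonneg.1 hb)

theorem Convex.sub_mul_sub_pos_of_forall_ne {E : Type*} [AddCommGroup E] [Module ℝ E]
    {s : Set E} (hs : Convex ℝ s) (ℓ : E →ₗ[ℝ] ℝ) {c : ℝ} (hc : ∀ x ∈ s, ℓ x ≠ c)
    {a b : E} (ha : a ∈ s) (hb : b ∈ s) : 0 < (ℓ a - c) * (ℓ b - c) := by
  by_contra! h
  have hc_mem : c ∈ ℓ '' s :=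
    (hs.linear_image ℓ).ordConnected.uIcc_subset (mem_image_of_mem ℓ ha)
      (mem_image_of_mem ℓ hb) (mem_uIcc_of_sub_mul_sub_nonpos h)
  obtain ⟨x, hx, hxc⟩ := hc_mem
  exact hc x hx hxc

theorem convexOn_univ_of_forall_le {E : Type*} [AddCommGroup E] [Module ℝ E] {f : E → ℝ}
    (hf : ∀ x y : E, ∀ t : ℝ, 0 ≤ t → t ≤ 1 → f (t • x + (1 - t) • y) ≤ t * f x + (1 - t) * f y) :
    ConvexOn ℝ univ f := by
  refine ⟨convex_univ, fun x _ y _ t s ht hs hts => ?_⟩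
  obtain rfl : s = 1 - t := eq_sub_of_add_eq' hts
  exact hf x y t ht (sub_nonneg.1 hs)

theorem convex_min_on_hyperplane_sublevel_one_side_general
    {E : Type*} [NormedAddCommGroup E] [InnerProductSpace ℝ E]
    (f : E → ℝ)
    (hconv : ∀ x y : E, ∀ t : ℝ, 0 ≤ t → t ≤ 1 →
      f (t • x + (1 - t) • y) ≤ t * f x + (1 - t) * f y)
    (w : E) (c : ℝ)
    (x₀ : E)
    (hmin : ∀ y : E, (inner ℝ w y : ℝ) = c → f x₀ ≤ f y)
    (a b : E) (ha : f a < f x₀) (hb : f b < f x₀) :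
    (inner ℝ w a : ℝ) - c ≠ 0 ∧ (inner ℝ w b : ℝ) - c ≠ 0 ∧
      0 < ((inner ℝ w a : ℝ) - c) * ((inner ℝ w b : ℝ) - c) := by
  have hsublevel : Convex ℝ {y ∈ univ | f y < f x₀} :=
    (convexOn_univ_of_forall_le hconv).convex_lt (f x₀)
  have hoff : ∀ y ∈ {y ∈ univ | f y < f x₀}, innerₛₗ ℝ w y ≠ c :=
    fun y hy hyc => (hmin y hyc).not_gt hy.2
  have hpos : 0 < ((inner ℝ w a : ℝ) - c) * ((inner ℝ w b : ℝ) - c) :=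
    hsublevel.sub_mul_sub_pos_of_forall_ne (innerₛₗ ℝ w) hoff ⟨trivial, ha⟩ ⟨trivial, hb⟩
  exact ⟨left_ne_zero_of_mul hpos.ne', right_ne_zero_of_mul hpos.ne', hpos⟩

/-- Half-space elimination lemma: if a convex function `f` on a real inner product space
attains its minimum over the hyperplane `H = {x : ⟪w, x⟫ = c}` at `x₀`, then all points
with `f`-value strictly below `f x₀` lie strictly on one side of `H`. -/
theorem convex_min_on_hyperplane_sublevel_one_side
    {E : Type*} [NormedAddCommGroup E] [InnerProductSpace ℝ E]
    (f : E → ℝ)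
    (hconv : ∀ x y : E, ∀ t : ℝ, 0 ≤ t → t ≤ 1 →
      f (t • x + (1 - t) • y) ≤ t * f x + (1 - t) * f y)
    (w : E) (hw : w ≠ 0) (c : ℝ)
    (x₀ : E) (hx₀ : (inner ℝ w x₀ : ℝ) = c)
    (hmin : ∀ y : E, (inner ℝ w y : ℝ) = c → f x₀ ≤ f y)
    (a b : E) (ha : f a < f x₀) (hb : f b < f x₀) :
    (inner ℝ w a : ℝ) - c ≠ 0 ∧ (inner ℝ w b : ℝ) - c ≠ 0 ∧
      0 < ((inner ℝ w a : ℝ) - c) * ((inner ℝ w b : ℝ) - c) :=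
  convex_min_on_hyperplane_sublevel_one_side_general f hconv w c x₀ hmin a b ha hb
end
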